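/- arXiv:1508.01688 — 2 statements merged into one kernel-verified Lean document; each statement's English description precedes it below -/
import Mathlib

section
/- For n ≥ 1 and k ≥ 1, the number of sequences (d_0,...,d_n) of nonnegative integers with d_0+⋯+d_n = n, all partial sums d_0+⋯+d_{i-1} ≥ i for i in {1,...,n}, and d_i ≡ 0 (mod k) for all i in {1,...,n} (with d_0 ≡ n mod k), equals Σ_{0 ≤ j ≤ n/k} ((n-jk)/n)·C(n+j-1, j). -/
/-- `d` is the multi-degree sequence of a plane tree with `n+1` nodes:
`d_0 + ⋯ + d_n = n` and `d_0 + ⋯ + d_{i-1} ≥ i` for all `i ∈ {1,…,n}`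
(entries beyond index `n` vanish). -/
def IsTreeDeg (n : ℕ) (d : ℕ → ℕ) : Prop :=
  (∀ i, n < i → d i = 0) ∧ (∑ i ∈ Finset.range (n + 1), d i = n) ∧
    (∀ i, 1 ≤ i → i ≤ n → i ≤ ∑ j ∈ Finset.range i, d j)

/-!
Writing `d_i = k e_i` for `1 ≤ i ≤ n`, the sequence is determined by `e : Fin n → ℕ`, since
`d_0 = n - k ∑ e_i`, and the prefix conditions say that the walk with steps `k e_i - 1` stays
strictly above its final value `-d_0` before time `n`. By the cycle lemma, exactly
`d_0 = n - k j` of the `n` cyclic rotations of an `e` with `∑ e_i = j` have this property: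
extended periodically, the walk loses `n - k j` per period and, having down-steps of size
one, the rotations that work are those starting at the `n - k j` new minima reached during
the second period. Double counting rotations over the `(n + j - 1).choose j` compositions of
`j` into `n` parts gives the `j`-th summand.
-/

open Finset

section Records

variable (F : ℕ → ℤ)

def prefixMin (T : ℕ) : ℤ := (range (T + 1)).inf' nonempty_range_add_one F

def IsLowRecord (t : ℕ) : Prop := ∀ s < t, F t < F s

instance : DecidablePred (IsLowRecord F) :=
  fun _ => inferInstanceAs (Decidable (∀ s < _, _ < _))

variable {F}

lemma prefixMin_le {s T : ℕ} (h : s ≤ T) : prefixMin F T ≤ F s :=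
  inf'_le F (mem_range.2 (by omega))

lemma exists_eq_prefixMin (T : ℕ) : ∃ s ≤ T, F s = prefixMin F T := by
  obtain ⟨s, hs, h⟩ := exists_mem_eq_inf' (nonempty_range_add_one (n := T)) F
  exact ⟨s, Nat.lt_succ_iff.1 (mem_range.1 hs), h.symm⟩

lemma lt_prefixMin_iff {x : ℤ} {T : ℕ} : x < prefixMin F T ↔ ∀ s ≤ T, x < F s := by
  simp [prefixMin]

lemma prefixMin_succ (T : ℕ) : prefixMin F (T + 1) = min (prefixMin F T) (F (T + 1)) := by
  simp only [prefixMin, range_add_one (n := T + 1)]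
  rw [inf'_insert, min_comm]

-- Down-steps of size at most one reach each new minimum exactly once.
lemma count_isLowRecord_succ (hstep : ∀ t, F t - 1 ≤ F (t + 1)) (T : ℕ) :
    (Nat.count (IsLowRecord F) (T + 1) : ℤ) = F 0 + 1 - prefixMin F T := by
  induction T with
  | zero => simp [Nat.count_succ, IsLowRecord, prefixMin]
  | succ T ih =>
    have hrecord : IsLowRecord F (T + 1) ↔ F (T + 1) < prefixMin F T := by
      simp [IsLowRecord, lt_prefixMin_iff]
    have hmin : prefixMin F T ≤ F T := prefixMin_le le_rfl
    have := hstep T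
    rw [Nat.count_succ, prefixMin_succ]
    split_ifs with h <;> rw [hrecord] at h <;> push_cast <;> omega

lemma prefixMin_add_period {n m T : ℕ} (hper : ∀ t, F (t + n) = F t - m) (hT : n ≤ T + 1) :
    prefixMin F (T + n) = prefixMin F T - m := by
  apply le_antisymm
  · obtain ⟨s, hs, hFs⟩ := exists_eq_prefixMin (F := F) T
    rw [← hFs, ← hper]
    exact prefixMin_le (by omega)
  · obtain ⟨s, hs, hFs⟩ := exists_eq_prefixMin (F := F) (T + n)
    rw [← hFs]
    rcases lt_or_ge s n with hsn | hsn
    · have := prefixMin_le (F := F) (show s ≤ T by omega)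
      omega
    · obtain ⟨u, rfl⟩ := Nat.exists_eq_add_of_le' hsn
      have := prefixMin_le (F := F) (show u ≤ T by omega)
      rw [hper]
      omega

lemma forall_lt_shift_iff_isLowRecord {n m r : ℕ} (hper : ∀ t, F (t + n) = F t - m)
    (hr : r < n) :
    (∀ t < n, F (r + n) < F (r + t)) ↔ IsLowRecord F (r + n) := by
  refine ⟨fun h s hs => ?_, fun h t ht => h _ (by omega)⟩
  rcases le_or_gt r s with hrs | hsr
  · obtain ⟨t, rfl⟩ := Nat.exists_eq_add_of_le hrs
    exact h t (by omega)
  · have := h (s + n - r) (by omega)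
    rw [Nat.add_sub_cancel' (by omega), hper s] at this
    omega

theorem cycle_lemma {n m : ℕ} (hn : 0 < n) (hstep : ∀ t, F t - 1 ≤ F (t + 1))
    (hper : ∀ t, F (t + n) = F t - m) :
    #{r ∈ range n | ∀ t < n, F (r + n) < F (r + t)} = m := by
  obtain ⟨N, rfl⟩ : ∃ N, n = N + 1 := ⟨n - 1, by omega⟩
  rw [filter_congr fun r hr => forall_lt_shift_iff_isLowRecord hper (mem_range.1 hr),
    ← Nat.count_eq_card_filter_range]
  have hsplit := Nat.count_add' (IsLowRecord F) (N + 1) (N + 1)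
  have hmin := prefixMin_add_period hper (le_refl (N + 1))
  have h₁ := count_isLowRecord_succ hstep N
  have h₂ := count_isLowRecord_succ hstep (N + (N + 1))
  rw [add_right_comm] at h₂
  omega

end Records

section Walk

open Fin.NatCast

variable {n : ℕ} [NeZero n] (k : ℕ)

-- `e l` reads `e (l % n)`: the walk runs through `e` periodically.
def walk (e : Fin n → ℕ) (t : ℕ) : ℤ := k * ∑ l ∈ range t, (e l : ℤ) - t

def IsDominating (e : Fin n → ℕ) : Prop := ∀ t < n, walk k e n < walk k e t

instance : DecidablePred (IsDominating (n := n) k) :=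
  fun _ => inferInstanceAs (Decidable (∀ t < n, _ < _))

variable {k}

lemma walk_succ (e : Fin n → ℕ) (t : ℕ) : walk k e (t + 1) = walk k e t + (k * e t - 1) := by
  simp only [walk, sum_range_succ]
  push_cast
  ring

lemma sum_range_natCast_fin {M : Type*} [AddCommMonoid M] (f : Fin n → M) :
    ∑ l ∈ range n, f l = ∑ i, f i := by
  simp [← Fin.sum_univ_eq_sum_range]

lemma walk_period (e : Fin n → ℕ) : walk k e n = k * ∑ i, (e i : ℤ) - n := by
  rw [walk, sum_range_natCast_fin (fun i => (e i : ℤ))]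

lemma walk_add_period (e : Fin n → ℕ) (t : ℕ) :
    walk k e (t + n) = walk k e t + walk k e n := by
  induction t with
  | zero => simp [walk]
  | succ t ih =>
    rw [add_right_comm, walk_succ, ih, walk_succ]
    simp only [Nat.cast_add, Fin.natCast_self, add_zero]
    ring

lemma walk_rotate (e : Fin n → ℕ) (c t : ℕ) :
    walk k (e ∘ Equiv.addRight (c : Fin n)) t = walk k e (c + t) - walk k e c := by
  induction t with
  | zero => simp [walk]
  | succ t ih =>
    rw [walk_succ, ih, ← add_assoc, walk_succ]
    simp only [Function.comp_apply, Equiv.coe_addRight, Nat.cast_add, add_comm (t : Fin n)]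
    ring

lemma isDominating_rotate_iff (e : Fin n → ℕ) (c : ℕ) :
    IsDominating k (e ∘ Equiv.addRight (c : Fin n)) ↔
      ∀ t < n, walk k e (c + n) < walk k e (c + t) := by
  simp only [IsDominating, walk_rotate, sub_lt_sub_iff_right]

lemma IsDominating.mul_sum_lt {e : Fin n → ℕ} (h : IsDominating k e) : k * ∑ i, e i < n := by
  have := h 0 (NeZero.pos n)
  rw [walk_period] at this
  simp only [walk, range_zero, sum_empty] at this
  exact_mod_cast (by linarith : (k * ∑ i, (e i : ℤ) : ℤ) < n)

lemma card_filter_isDominating_rotate (e : Fin n → ℕ) (h : k * ∑ i, e i ≤ n) :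
    #{c ∈ range n | IsDominating k (e ∘ Equiv.addRight (Nat.cast c : Fin n))} =
      n - k * ∑ i, e i := by
  simp_rw [isDominating_rotate_iff]
  apply cycle_lemma (NeZero.pos n)
  · intro t
    rw [walk_succ]
    have : (0 : ℤ) ≤ k * e t := by positivity
    linarith
  · intro t
    rw [walk_add_period, walk_period]
    push_cast [h]
    ring

end Walk

section Counting

open Fin.NatCast

lemma card_antidiagonalTuple (n j : ℕ) : #(Nat.antidiagonalTuple n j) = (n + j - 1).choose j := by
  rw [card_eq_of_equiv_fintype ((Equiv.subtypeEquivRight fun _ => Nat.mem_antidiagonalTuple).trans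
    (Sym.equivNatSumOfFintype (Fin n) j).symm), Sym.card_sym_eq_choose, Fintype.card_fin]

lemma card_filter_antidiagonalTuple_comp_perm {n : ℕ} (σ : Equiv.Perm (Fin n))
    (P : (Fin n → ℕ) → Prop) [DecidablePred P] (j : ℕ) :
    #{e ∈ Nat.antidiagonalTuple n j | P (e ∘ σ)} =
      #{e ∈ Nat.antidiagonalTuple n j | P e} := by
  refine card_nbij' (· ∘ σ) (· ∘ σ.symm) (fun e he => ?_) (fun e he => ?_)
    (fun e _ => by ext; simp) (fun e _ => by ext; simp)
  · simp only [coe_filter, Nat.mem_antidiagonalTuple, Set.mem_ofPred_eq] at he ⊢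
    exact ⟨by rw [← he.1]; exact Equiv.sum_comp σ e, he.2⟩
  · simp only [coe_filter, Nat.mem_antidiagonalTuple, Set.mem_ofPred_eq] at he ⊢
    exact ⟨by rw [← he.1]; exact Equiv.sum_comp σ.symm e,
      by simpa [Function.comp_assoc] using he.2⟩

variable {n k : ℕ} [NeZero n]

lemma mul_card_filter_isDominating (j : ℕ) (hj : k * j ≤ n) :
    n * #{e ∈ Nat.antidiagonalTuple n j | IsDominating k e} =
      (n - k * j) * #(Nat.antidiagonalTuple n j) := by
  let rotated (e : Fin n → ℕ) (c : ℕ) : Prop :=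
    IsDominating k (e ∘ Equiv.addRight (c : Fin n))
  calc n * #{e ∈ Nat.antidiagonalTuple n j | IsDominating k e}
      = ∑ c ∈ range n, #((Nat.antidiagonalTuple n j).bipartiteBelow rotated c) := by
        simp only [bipartiteBelow, rotated, card_filter_antidiagonalTuple_comp_perm, sum_const,
          card_range, smul_eq_mul]
    _ = ∑ e ∈ Nat.antidiagonalTuple n j, #((range n).bipartiteAbove rotated e) :=
        (sum_card_bipartiteAbove_eq_sum_card_bipartiteBelow _).symm
    _ = (n - k * j) * #(Nat.antidiagonalTuple n j) := by
        rw [sum_congr rfl fun e he => ?_, sum_const, smul_eq_mul, mul_comm]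
        have hsum := Nat.mem_antidiagonalTuple.1 he
        rw [bipartiteAbove, card_filter_isDominating_rotate e (by rwa [hsum]), hsum]

end Counting

section TreeDegrees

open Fin.NatCast

variable {n k : ℕ} [NeZero n]

lemma isTreeDeg_iff {d : ℕ → ℕ} {e : Fin n → ℕ} (hzero : ∀ i, n < i → d i = 0)
    (hsucc : ∀ i < n, d (i + 1) = k * e i) :
    IsTreeDeg n d ↔ d 0 + k * ∑ i, e i = n ∧ IsDominating k e := by
  have hprefix : ∀ t ≤ n, ∑ i ∈ range (t + 1), d i = d 0 + k * ∑ l ∈ range t, e l := by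
    intro t ht
    rw [sum_range_succ', mul_sum, sum_congr rfl fun i hi => hsucc i (by simp at hi; omega),
      add_comm]
  have hwalk : ∀ t, walk k e t = ((k * ∑ l ∈ range t, e l : ℕ) : ℤ) - t := by
    intro t
    push_cast
    rfl
  rw [IsTreeDeg, and_iff_right hzero, hprefix n le_rfl, sum_range_natCast_fin]
  refine and_congr_right fun hsum => ⟨fun h t ht => ?_, fun h i hi hin => ?_⟩
  · have := h (t + 1) (by omega) (by omega)
    rw [hprefix t ht.le] at this
    rw [hwalk, hwalk, sum_range_natCast_fin]
    omega
  · obtain ⟨t, rfl⟩ := Nat.exists_eq_add_of_le' hi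
    have := h t (by omega)
    rw [hwalk, hwalk, sum_range_natCast_fin] at this
    rw [hprefix t (by omega)]
    omega

def toDegrees (n k : ℕ) [NeZero n] (e : Fin n → ℕ) : ℕ → ℕ
  | 0 => n - k * ∑ i, e i
  | i + 1 => if i < n then k * e i else 0

def ofDegrees (n k : ℕ) (d : ℕ → ℕ) : Fin n → ℕ := fun i => d ((i : ℕ) + 1) / k

lemma isTreeDeg_toDegrees {e : Fin n → ℕ} (h : IsDominating k e) :
    IsTreeDeg n (toDegrees n k e) := by
  refine (isTreeDeg_iff (fun i hi => ?_) (fun i hi => if_pos hi)).2 ⟨?_, h⟩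
  · obtain ⟨i, rfl⟩ := Nat.exists_eq_add_of_le' (show 1 ≤ i by omega)
    exact if_neg (by omega)
  · have := h.mul_sum_lt
    simp only [toDegrees]
    omega

lemma succ_eq_mul_ofDegrees {d : ℕ → ℕ} (hdvd : ∀ i, 1 ≤ i → i ≤ n → k ∣ d i) (i : ℕ)
    (hi : i < n) : d (i + 1) = k * ofDegrees n k d i := by
  rw [ofDegrees, Fin.val_natCast, Nat.mod_eq_of_lt hi,
    Nat.mul_div_cancel' (hdvd _ (by omega) hi)]

def treeDegEquiv (hk : 0 < k) :
    {d : ℕ → ℕ //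
        IsTreeDeg n d ∧ d 0 % k = n % k ∧ ∀ i, 1 ≤ i → i ≤ n → k ∣ d i} ≃
      {e : Fin n → ℕ // IsDominating k e} where
  toFun d :=
    ⟨ofDegrees n k d, ((isTreeDeg_iff d.2.1.1 (succ_eq_mul_ofDegrees d.2.2.2)).1 d.2.1).2⟩
  invFun e := by
    refine ⟨toDegrees n k e, isTreeDeg_toDegrees e.2, Nat.sub_mul_mod e.2.mul_sum_lt.le, ?_⟩
    intro i hi hin
    obtain ⟨i, rfl⟩ := Nat.exists_eq_add_of_le' hi
    simp only [toDegrees, if_pos (show i < n by omega), dvd_mul_right]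
  left_inv := by
    rintro ⟨d, hd, -, hdvd⟩
    have hsucc := succ_eq_mul_ofDegrees hdvd
    have hsum := ((isTreeDeg_iff hd.1 hsucc).1 hd).1
    refine Subtype.ext (funext fun i => ?_)
    rcases i with _ | i
    · simp only [toDegrees]
      omega
    · simp only [toDegrees]
      split_ifs with hi
      · exact (hsucc i hi).symm
      · exact (hd.1 _ (by omega)).symm
  right_inv := by
    rintro ⟨e, -⟩
    refine Subtype.ext (funext fun i => ?_)
    simp [ofDegrees, toDegrees, hk.ne']

lemma natCard_isDominating_eq_sum (hk : 0 < k) :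
    Nat.card {e : Fin n → ℕ // IsDominating k e} =
      ∑ j ∈ range (n / k + 1), #{e ∈ Nat.antidiagonalTuple n j | IsDominating k e} := by
  rw [← card_biUnion, ← Nat.card_eq_finsetCard]
  · refine Nat.card_congr (Equiv.subtypeEquivRight fun e => ?_)
    simp only [mem_biUnion, mem_range, mem_filter, Nat.mem_antidiagonalTuple]
    refine ⟨fun h => ⟨_, ?_, rfl, h⟩, fun ⟨_, _, _, h⟩ => h⟩
    have : ∑ i, e i ≤ n / k := (Nat.le_div_iff_mul_le hk).2 (by linarith [h.mul_sum_lt])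
    omega
  · intro j _ j' _ hne
    refine disjoint_left.2 fun e he he' => hne ?_
    simp only [mem_filter, Nat.mem_antidiagonalTuple] at he he'
    rw [← he.1, ← he'.1]

end TreeDegrees

/-- The size of the largest `k`-equivalence class of plane trees with `n+1` nodes:
trees whose multi-degree is congruent to `(n,0,…,0)` modulo `k`. -/
theorem largest_class_size (n k : ℕ) (hn : 1 ≤ n) (hk : 1 ≤ k) :
    n * Nat.card {d : ℕ → ℕ // IsTreeDeg n d ∧ d 0 % k = n % k ∧
        ∀ i, 1 ≤ i → i ≤ n → k ∣ d i} =
      ∑ j ∈ Finset.range (n / k + 1), (n - j * k) * (n + j - 1).choose j := by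
  have : NeZero n := ⟨by omega⟩
  rw [Nat.card_congr (treeDegEquiv hk), natCard_isDominating_eq_sum hk, mul_sum]
  refine sum_congr rfl fun j hj => ?_
  have hj : k * j ≤ n := by
    rw [mul_comm]
    exact (Nat.le_div_iff_mul_le hk).1 (Nat.lt_succ_iff.1 (mem_range.1 hj))
  rw [mul_card_filter_isDominating j hj, card_antidiagonalTuple, mul_comm j k]
end

section
/- The generating function C_k(z) = Σ_{n≥0} C_{k,n} z^{n+1} of the modular Catalan numbers satisfies the polynomial equation (C_k(z) - z)^k - C_k(z)^k + C_k(z)^{k-1} - z·C_k(z)^{k-2} = 0, for k ≥ 2. -/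
/-- The generalized Motzkin number `M_{k,n}`: the number of plane trees with `n+1`
nodes all of whose nodes have degree at most `k`. -/
noncomputable def motzkinNum (k n : ℕ) : ℕ :=
  Nat.card {d : ℕ → ℕ // IsTreeDeg n d ∧ ∀ i, i ≤ n → d i ≤ k}

/-- The modular Catalan number `C_{k,n}`: the number of plane trees with `n+1`
nodes whose non-root nodes have degree less than `k`. -/
noncomputable def modCatalanNum (k n : ℕ) : ℕ :=
  Nat.card {d : ℕ → ℕ // IsTreeDeg n d ∧ ∀ i, 1 ≤ i → i ≤ n → d i < k}

/-- The generating function `M_k(z) = ∑_{n≥0} M_{k,n} z^{n+1}`. -/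
noncomputable def Mgf (k : ℕ) : PowerSeries ℤ :=
  PowerSeries.mk fun m => if m = 0 then 0 else (motzkinNum k (m - 1) : ℤ)

/-- The generating function `C_k(z) = ∑_{n≥0} C_{k,n} z^{n+1}`. -/
noncomputable def Cgf (k : ℕ) : PowerSeries ℤ :=
  PowerSeries.mk fun m => if m = 0 then 0 else (modCatalanNum k (m - 1) : ℤ)

/-!
Encode a plane tree by its preorder degree sequence. Cutting off the last subtree of the root
splits a tree whose root has degree `r + 1` into a tree whose root has degree `r` and an arbitrary
tree, the cut being at the first `i ≥ 1` with `d 0 + ⋯ + d (i - 1) = i`. So if all non-root degrees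
are at most `j` and non-root nodes are weighted by `z`, the trees with root degree `r` have
generating function `M ^ r` with `M = M_j`. Summing over `r ≤ j` gives `M = z (1 + M + ⋯ + M ^ j)`,
and the recursion over `r` for `C = C_{j+1}` gives `C = z + C M`. Hence `z = C (1 - M)` and, by the
geometric sum, `M = C (1 - M ^ k)` for `k = j + 1`; since `C - z = C M`, the claimed polynomial
equals `C ^ (k - 1) (M - C (1 - M ^ k)) = 0`.
-/

open Finset PowerSeries

lemma card_subtype_eq_sum_card_fiber {α : Type*} {P : α → Prop} [Finite {x // P x}]
    (f : α → ℕ) {N : ℕ} (hf : ∀ x, P x → f x < N) :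
    Nat.card {x // P x} = ∑ r ∈ range N, Nat.card {x // P x ∧ f x = r} := by
  let g : {x // P x} → Fin N := fun x => ⟨f x, hf x x.2⟩
  rw [← Nat.card_congr (Equiv.sigmaFiberEquiv g), Nat.card_sigma, ← Fin.sum_univ_eq_sum_range]
  refine sum_congr rfl fun r _ => Nat.card_congr ?_
  exact (Equiv.subtypeEquivRight fun x => Fin.ext_iff).trans
    (Equiv.subtypeSubtypeEquivSubtypeInter P (f · = r))

lemma PowerSeries.X_mul_mk {R : Type*} [Semiring R] (f : ℕ → R) :
    X * mk f = mk fun m => if m = 0 then 0 else f (m - 1) := by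
  ext (_ | m) <;> simp [coeff_succ_X_mul]

namespace IsTreeDeg

variable {n : ℕ} {d : ℕ → ℕ}

lemma apply_le (h : IsTreeDeg n d) (i : ℕ) : d i ≤ n := by
  rcases le_or_gt i n with hi | hi
  · exact h.2.1 ▸ single_le_sum (fun _ _ => Nat.zero_le _) (mem_range.2 (Nat.lt_succ_of_le hi))
  · exact (h.1 i hi).trans_le (Nat.zero_le n)

lemma zero_iff : IsTreeDeg 0 d ↔ d = 0 := by
  refine ⟨fun h => funext fun i => ?_, fun h => ⟨fun i _ => h ▸ rfl, by simp [h], by omega⟩⟩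
  exact Nat.le_zero.1 (h.apply_le i)

lemma root_pos (h : IsTreeDeg (n + 1) d) : 0 < d 0 := by
  simpa [Nat.one_le_iff_ne_zero, Nat.pos_iff_ne_zero] using h.2.2 1 le_rfl (by omega)

lemma finite (n : ℕ) : {d | IsTreeDeg n d}.Finite := by
  refine Set.Finite.of_finite_image (f := fun d (i : Fin (n + 1)) => d i)
    ((Set.Finite.pi (t := fun _ => Set.Iic n) fun _ => Set.finite_Iic n).subset ?_)
    fun d hd e he hde => funext fun i => ?_
  · rintro _ ⟨d, hd, rfl⟩ i -
    exact hd.apply_le i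
  · rcases le_or_gt i n with hi | hi
    · exact congrFun hde ⟨i, Nat.lt_succ_of_le hi⟩
    · rw [hd.1 i hi, he.1 i hi]

end IsTreeDeg

/-- Attach the tree `e` as a new last subtree of the root of the tree `d` on `p + 1` nodes. -/
def graft (p : ℕ) (d e : ℕ → ℕ) (i : ℕ) : ℕ :=
  if i = 0 then d 0 + 1 else if i ≤ p then d i else e (i - (p + 1))

def rootPart (p : ℕ) (d : ℕ → ℕ) (i : ℕ) : ℕ :=
  if i = 0 then d 0 - 1 else if i ≤ p then d i else 0

section Graft

variable {p q i : ℕ} {d e : ℕ → ℕ}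

lemma graft_of_le (hi0 : i ≠ 0) (hip : i ≤ p) : graft p d e i = d i := by
  simp [graft, hi0, hip]

lemma graft_add (m : ℕ) : graft p d e (p + 1 + m) = e m := by
  simp [graft, show ¬ p + 1 + m ≤ p by omega]

lemma sum_range_graft_of_le (hi0 : i ≠ 0) (hip : i ≤ p + 1) :
    ∑ l ∈ range i, graft p d e l = ∑ l ∈ range i, d l + 1 := by
  obtain ⟨i, rfl⟩ := Nat.exists_eq_succ_of_ne_zero hi0
  rw [sum_range_succ', sum_range_succ' d, sum_congr rfl fun l hl => graft_of_le l.succ_ne_zero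
    (by rw [mem_range] at hl; omega)]
  simp [graft, add_assoc]

lemma sum_range_graft_add (m : ℕ) :
    ∑ l ∈ range (p + 1 + m), graft p d e l =
      ∑ l ∈ range (p + 1), d l + 1 + ∑ l ∈ range m, e l := by
  rw [sum_range_add, sum_range_graft_of_le p.succ_ne_zero le_rfl]
  simp only [graft_add]

lemma isTreeDeg_graft (hd : IsTreeDeg p d) (he : IsTreeDeg q e) :
    IsTreeDeg (p + q + 1) (graft p d e) := by
  refine ⟨fun i hi => ?_, ?_, fun i hi1 hi => ?_⟩
  · rw [graft, if_neg (by omega), if_neg (by omega)]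
    exact he.1 _ (by omega)
  · rw [show p + q + 1 + 1 = p + 1 + (q + 1) by omega, sum_range_graft_add, hd.2.1, he.2.1]
    omega
  · rcases le_or_gt i (p + 1) with hip | hip
    · rw [sum_range_graft_of_le (by omega) hip]
      rcases hip.lt_or_eq with hip | rfl
      · have := hd.2.2 i hi1 (by omega)
        omega
      · rw [hd.2.1]
    · obtain ⟨m, rfl⟩ := Nat.exists_eq_add_of_lt hip
      rw [add_assoc, sum_range_graft_add, hd.2.1]
      have := he.2.2 (m + 1) (by omega) (by omega)
      omega

lemma lt_sum_range_graft (hd : IsTreeDeg p d) (hi0 : i ≠ 0) (hip : i ≤ p) :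
    i < ∑ l ∈ range i, graft p d e l := by
  rw [sum_range_graft_of_le hi0 (by omega)]
  have := hd.2.2 i (by omega) hip
  omega

lemma sum_range_graft_eq (hd : IsTreeDeg p d) :
    ∑ l ∈ range (p + 1), graft p d e l = p + 1 := by
  rw [sum_range_graft_of_le p.succ_ne_zero le_rfl, hd.2.1]

lemma graft_inj {p' : ℕ} {d' e' : ℕ → ℕ} (hd : IsTreeDeg p d) (hd' : IsTreeDeg p' d')
    (h : graft p d e = graft p' d' e') : p = p' ∧ d = d' ∧ e = e' := by
  obtain rfl : p = p' := by
    by_contra hne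
    rcases Nat.lt_or_gt_of_ne hne with hlt | hlt
    · have := lt_sum_range_graft (e := e') hd' (i := p + 1) p.succ_ne_zero hlt
      rw [← h, sum_range_graft_eq hd] at this
      exact this.false
    · have := lt_sum_range_graft (e := e) hd (i := p' + 1) p'.succ_ne_zero hlt
      rw [h, sum_range_graft_eq hd'] at this
      exact this.false
  refine ⟨rfl, funext fun i => ?_, funext fun m => ?_⟩
  · rcases Nat.eq_zero_or_pos i with rfl | hi0
    · simpa [graft] using congrFun h 0
    rcases le_or_gt i p with hip | hip
    · simpa [graft_of_le hi0.ne' hip] using congrFun h i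
    · rw [hd.1 i hip, hd'.1 i hip]
  · simpa [graft_add] using congrFun h (p + 1 + m)

lemma graft_rootPart (hd0 : 0 < d 0) : graft p (rootPart p d) (fun m => d (p + 1 + m)) = d := by
  funext i
  rcases Nat.eq_zero_or_pos i with rfl | hi0
  · simp [graft, rootPart]; omega
  rcases le_or_gt i p with hip | hip
  · simp [graft, rootPart, hi0.ne', hip]
  · obtain ⟨m, rfl⟩ := Nat.exists_eq_add_of_lt hip
    rw [add_right_comm, graft_add]

end Graft

section Split

variable {n p q : ℕ} {d : ℕ → ℕ}

lemma IsTreeDeg.exists_split (hd : IsTreeDeg (n + 1) d) :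
    ∃ p ≤ n, ∑ l ∈ range (p + 1), d l = p + 1 ∧ ∀ i, i ≠ 0 → i ≤ p → i < ∑ l ∈ range i, d l := by
  classical
  have hfull : ∑ l ∈ range (n + 1), d l = n + 1 := by
    refine le_antisymm ?_ (hd.2.2 _ (by omega) le_rfl)
    have := hd.2.1
    rw [sum_range_succ] at this
    omega
  have hex : ∃ t, t ≠ 0 ∧ ∑ l ∈ range t, d l = t := ⟨n + 1, n.succ_ne_zero, hfull⟩
  obtain ⟨ht0, ht⟩ := Nat.find_spec hex
  have htn := Nat.find_min' hex ⟨n.succ_ne_zero, hfull⟩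
  refine ⟨Nat.find hex - 1, by omega, by rwa [Nat.sub_add_cancel (by omega)], fun i hi0 hi => ?_⟩
  have hne := Nat.find_min hex (show i < Nat.find hex by omega)
  exact (hd.2.2 i (by omega) (by omega)).lt_of_ne fun h => hne ⟨hi0, h.symm⟩

lemma isTreeDeg_rootPart (hd0 : 0 < d 0) (hp : ∑ l ∈ range (p + 1), d l = p + 1)
    (hlt : ∀ i, i ≠ 0 → i ≤ p → i < ∑ l ∈ range i, d l) : IsTreeDeg p (rootPart p d) := by
  have hsum : ∀ i, i ≠ 0 → i ≤ p + 1 →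
      ∑ l ∈ range i, d l = ∑ l ∈ range i, rootPart p d l + 1 := fun i hi0 hi => by
    conv_lhs => rw [← graft_rootPart (p := p) hd0]
    exact sum_range_graft_of_le hi0 hi
  refine ⟨fun i hi => by simp [rootPart, show i ≠ 0 by omega, show ¬ i ≤ p by omega], ?_,
    fun i hi0 hi => ?_⟩
  · have := hsum (p + 1) p.succ_ne_zero le_rfl
    omega
  · have := hsum i (by omega) (by omega)
    have := hlt i (by omega) hi
    omega

lemma isTreeDeg_tail (hd : IsTreeDeg (p + q + 1) d) (hp : ∑ l ∈ range (p + 1), d l = p + 1) :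
    IsTreeDeg q (fun m => d (p + 1 + m)) := by
  have hsum : ∀ m, ∑ l ∈ range (p + 1 + m), d l = p + 1 + ∑ l ∈ range m, d (p + 1 + l) :=
    fun m => by rw [sum_range_add, hp]
  refine ⟨fun m hm => hd.1 _ (by omega), ?_, fun i hi0 hi => ?_⟩ <;> dsimp only
  · have := hsum (q + 1)
    rw [show p + 1 + (q + 1) = p + q + 1 + 1 by omega, hd.2.1] at this
    omega
  · have := hsum i
    have := hd.2.2 (p + 1 + i) (by omega) (by omega)
    omega

end Split

lemma finite_of_isTreeDeg {n : ℕ} {P : (ℕ → ℕ) → Prop} (hP : ∀ d, P d → IsTreeDeg n d) :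
    Finite {d // P d} :=
  ((IsTreeDeg.finite n).subset hP).to_subtype

def IsRootDegTree (j n r : ℕ) (d : ℕ → ℕ) : Prop :=
  IsTreeDeg n d ∧ d 0 = r ∧ ∀ i, 1 ≤ i → i ≤ n → d i ≤ j

def IsMotzkinTree (j n : ℕ) (e : ℕ → ℕ) : Prop :=
  IsTreeDeg n e ∧ ∀ i, i ≤ n → e i ≤ j

instance (j n r : ℕ) : Finite {d // IsRootDegTree j n r d} := finite_of_isTreeDeg fun _ h => h.1

instance (j n : ℕ) : Finite {e // IsMotzkinTree j n e} := finite_of_isTreeDeg fun _ h => h.1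

noncomputable def rootDegNum (j n r : ℕ) : ℕ := Nat.card {d // IsRootDegTree j n r d}

section RootDeg

variable {j n p q r : ℕ} {d e : ℕ → ℕ}

lemma isRootDegTree_graft (hpq : p + q = n) (hd : IsRootDegTree j p r d)
    (he : IsMotzkinTree j q e) : IsRootDegTree j (n + 1) (r + 1) (graft p d e) := by
  subst hpq
  refine ⟨isTreeDeg_graft hd.1 he.1, by simp [graft, hd.2.1], fun i hi0 hi => ?_⟩
  rcases le_or_gt i p with hip | hip
  · rw [graft_of_le (by omega) hip]
    exact hd.2.2 i hi0 hip
  · obtain ⟨m, rfl⟩ := Nat.exists_eq_add_of_lt hip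
    rw [add_right_comm, graft_add]
    exact he.2 m (by omega)

lemma IsRootDegTree.exists_eq_graft (hd : IsRootDegTree j (n + 1) (r + 1) d) :
    ∃ p q, p + q = n ∧ ∃ d' e, IsRootDegTree j p r d' ∧ IsMotzkinTree j q e ∧
      graft p d' e = d := by
  obtain ⟨htree, hd0, hdj⟩ := hd
  obtain ⟨p, hpn, hp, hlt⟩ := htree.exists_split
  obtain ⟨q, rfl⟩ := Nat.exists_eq_add_of_le hpn
  refine ⟨p, q, rfl, rootPart p d, fun m => d (p + 1 + m),
    ⟨isTreeDeg_rootPart (by omega) hp hlt, by simp [rootPart, hd0], fun i hi0 hi => ?_⟩,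
    ⟨isTreeDeg_tail htree hp, fun m hm => hdj _ (by omega) (by omega)⟩,
    graft_rootPart (by omega)⟩
  simpa [rootPart, show i ≠ 0 by omega, hi] using hdj i hi0 (by omega)

end RootDeg

lemma rootDegNum_zero (j r : ℕ) : rootDegNum j 0 r = if r = 0 then 1 else 0 := by
  have hiff : ∀ d, IsRootDegTree j 0 r d ↔ d = 0 ∧ r = 0 := fun d => by
    simp only [IsRootDegTree, IsTreeDeg.zero_iff]
    constructor
    · rintro ⟨rfl, rfl, -⟩; simp
    · rintro ⟨rfl, rfl⟩; simp
  rw [rootDegNum, Nat.card_congr (Equiv.subtypeEquivRight hiff)]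
  split_ifs with hr <;> simp [hr]

lemma rootDegNum_succ_zero (j n : ℕ) : rootDegNum j (n + 1) 0 = 0 := by
  rw [rootDegNum, Nat.card_eq_zero]
  exact .inl ⟨fun ⟨_, hd, hd0, _⟩ => hd.root_pos.ne' hd0⟩

lemma rootDegNum_succ_succ (j n r : ℕ) :
    rootDegNum j (n + 1) (r + 1) =
      ∑ x ∈ antidiagonal n, rootDegNum j x.1 r * motzkinNum j x.2 := by
  let F : (Σ x : antidiagonal n,
      {d // IsRootDegTree j x.1.1 r d} × {e // IsMotzkinTree j x.1.2 e}) →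
      {d // IsRootDegTree j (n + 1) (r + 1) d} := fun x =>
    ⟨graft x.1.1.1 x.2.1.1 x.2.2.1,
      isRootDegTree_graft (HasAntidiagonal.mem_antidiagonal.1 x.1.2) x.2.1.2 x.2.2.2⟩
  have hF : F.Bijective := by
    refine ⟨?_, fun ⟨d, hd⟩ => ?_⟩
    · rintro ⟨⟨⟨p, q⟩, hpq⟩, ⟨d, hd⟩, ⟨e, he⟩⟩ ⟨⟨⟨p', q'⟩, hpq'⟩, ⟨d', hd'⟩, ⟨e', he'⟩⟩ h
      rw [HasAntidiagonal.mem_antidiagonal] at hpq hpq'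
      obtain ⟨rfl, rfl, rfl⟩ := graft_inj hd.1 hd'.1 (congrArg Subtype.val h)
      obtain rfl : q = q' := by dsimp only at hpq'; omega
      rfl
    · obtain ⟨p, q, hpq, d', e, hd', he, rfl⟩ := hd.exists_eq_graft
      exact ⟨⟨⟨(p, q), HasAntidiagonal.mem_antidiagonal.2 hpq⟩, ⟨d', hd'⟩, ⟨e, he⟩⟩, rfl⟩
  rw [rootDegNum, ← Nat.card_eq_of_bijective F hF, Nat.card_sigma]
  simp only [Nat.card_prod]
  exact sum_coe_sort (antidiagonal n) fun x => rootDegNum j x.1 r * motzkinNum j x.2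

lemma modCatalanNum_eq_sum_rootDegNum (j : ℕ) {n N : ℕ} (hN : n < N) :
    modCatalanNum (j + 1) n = ∑ r ∈ range N, rootDegNum j n r := by
  have := finite_of_isTreeDeg (n := n)
    (P := fun d => IsTreeDeg n d ∧ ∀ i, 1 ≤ i → i ≤ n → d i < j + 1) fun _ h => h.1
  rw [modCatalanNum,
    card_subtype_eq_sum_card_fiber (· 0) fun d hd => (hd.1.apply_le 0).trans_lt hN]
  refine sum_congr rfl fun r _ => Nat.card_congr (Equiv.subtypeEquivRight fun d => ?_)
  simp only [IsRootDegTree, Nat.lt_succ_iff]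
  tauto

lemma motzkinNum_eq_sum_rootDegNum (j n : ℕ) :
    motzkinNum j n = ∑ r ∈ range (j + 1), rootDegNum j n r := by
  change Nat.card {e // IsMotzkinTree j n e} = _
  rw [card_subtype_eq_sum_card_fiber (· 0) fun d hd => Nat.lt_succ_of_le (hd.2 0 n.zero_le)]
  refine sum_congr rfl fun r hr => Nat.card_congr (Equiv.subtypeEquivRight fun d => ?_)
  rw [mem_range] at hr
  refine ⟨fun ⟨⟨hd, hdj⟩, hd0⟩ => ⟨hd, hd0, fun i _ hi => hdj i hi⟩,
    fun ⟨hd, hd0, hdj⟩ => ⟨⟨hd, fun i hi => ?_⟩, hd0⟩⟩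
  rcases Nat.eq_zero_or_pos i with rfl | hi0
  · omega
  · exact hdj i hi0 hi

lemma modCatalanNum_succ_succ (j n : ℕ) :
    modCatalanNum (j + 1) (n + 1) =
      ∑ x ∈ antidiagonal n, modCatalanNum (j + 1) x.1 * motzkinNum j x.2 := by
  rw [modCatalanNum_eq_sum_rootDegNum j (N := n + 2) (by omega), sum_range_succ',
    rootDegNum_succ_zero, add_zero]
  simp_rw [rootDegNum_succ_succ]
  rw [sum_comm]
  refine sum_congr rfl fun x hx => ?_
  rw [← sum_mul, modCatalanNum_eq_sum_rootDegNum j (N := n + 1)]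
  have := HasAntidiagonal.mem_antidiagonal.1 hx
  omega

lemma Mgf_eq_X_mul_mk (j : ℕ) : Mgf j = X * PowerSeries.mk fun n => (motzkinNum j n : ℤ) := by
  rw [X_mul_mk]
  rfl

lemma Cgf_eq_X_mul_mk (k : ℕ) : Cgf k = X * PowerSeries.mk fun n => (modCatalanNum k n : ℤ) := by
  rw [X_mul_mk]
  rfl

noncomputable def rootDegGf (j r : ℕ) : PowerSeries ℤ :=
  PowerSeries.mk fun n => (rootDegNum j n r : ℤ)

lemma rootDegGf_zero (j : ℕ) : rootDegGf j 0 = 1 := by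
  ext (_ | n) <;> simp [rootDegGf, rootDegNum_zero, rootDegNum_succ_zero, coeff_one]

lemma rootDegGf_succ (j r : ℕ) : rootDegGf j (r + 1) = rootDegGf j r * Mgf j := by
  rw [Mgf_eq_X_mul_mk, mul_left_comm]
  ext (_ | n)
  · simp [rootDegGf, rootDegNum_zero]
  · rw [coeff_succ_X_mul, coeff_mul]
    simp [rootDegGf, rootDegNum_succ_succ]

lemma rootDegGf_eq_pow (j r : ℕ) : rootDegGf j r = Mgf j ^ r := by
  induction r with
  | zero => exact rootDegGf_zero j
  | succ r ih => rw [rootDegGf_succ, ih, pow_succ]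

theorem Mgf_eq_X_mul_sum_pow (j : ℕ) : Mgf j = X * ∑ r ∈ range (j + 1), Mgf j ^ r := by
  simp_rw [← rootDegGf_eq_pow]
  rw [Mgf_eq_X_mul_mk]
  congr 1
  ext n
  simp [rootDegGf, motzkinNum_eq_sum_rootDegNum]

theorem Cgf_eq_X_add_mul_Mgf (j : ℕ) : Cgf (j + 1) = X + Cgf (j + 1) * Mgf j := by
  suffices h : (PowerSeries.mk fun n => (modCatalanNum (j + 1) n : ℤ)) =
      1 + (PowerSeries.mk fun n => (modCatalanNum (j + 1) n : ℤ)) * Mgf j by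
    rw [Cgf_eq_X_mul_mk]
    conv_lhs => rw [h]
    ring
  rw [Mgf_eq_X_mul_mk, mul_left_comm]
  ext (_ | n)
  · simp [modCatalanNum_eq_sum_rootDegNum j zero_lt_one, rootDegNum_zero]
  · rw [map_add, coeff_succ_X_mul, coeff_mul, coeff_one]
    simp [modCatalanNum_succ_succ]

theorem sub_pow_sub_pow_add_pow_sub_mul_pow_eq_zero {R : Type*} [CommRing R] {c b x : R} (n : ℕ)
    (hc : c = x + c * b) (hb : b = x * ∑ r ∈ range (n + 2), b ^ r) :
    (c - x) ^ (n + 2) - c ^ (n + 2) + c ^ (n + 1) - x * c ^ n = 0 := by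
  obtain rfl : x = c * (1 - b) := by linear_combination -hc
  have hb' : b = c * (1 - b ^ (n + 2)) := by rwa [← mul_neg_geom_sum, ← mul_assoc]
  linear_combination c ^ (n + 1) * hb'

/-- `(C_k(z) - z)^k - C_k(z)^k + C_k(z)^{k-1} - z·C_k(z)^{k-2} = 0` for `k ≥ 2`. -/
theorem Cgf_poly_eq (k : ℕ) (hk : 2 ≤ k) :
    (Cgf k - PowerSeries.X) ^ k - (Cgf k) ^ k + (Cgf k) ^ (k - 1)
      - PowerSeries.X * (Cgf k) ^ (k - 2) = 0 := by
  obtain ⟨n, rfl⟩ : ∃ n, k = n + 2 := ⟨k - 2, by omega⟩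
  simpa using sub_pow_sub_pow_add_pow_sub_mul_pow_eq_zero n
    (Cgf_eq_X_add_mul_Mgf (n + 1)) (Mgf_eq_X_mul_sum_pow (n + 1))
end
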